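/- arXiv:1602.04763 — 5 statements merged into one kernel-verified Lean document; each statement's English description precedes it below -/
import Mathlib

section
/- Let E be a finite set, 0 ≤ r ≤ |E|, let G = J(E,r) be the Johnson graph, let K be a set of vertices of G, and let C₁, …, C_k be the connected components of the subgraph of G induced on K. Then the following are equivalent: (1) the complement of K in the vertex set of G is the set of bases of a matroid on E of rank r; (2) for each i ∈ {1,…,k}, the complement of C_i in the vertex set of G is the set of bases of a matroid on E of rank r. -/
open Filter Set

/-- The rank of a matroid `M`: the (common) cardinality of a base of `M`. -/
noncomputable def Matroid.rkt {α : Type*} (M : Matroid α) : ℕ :=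
  sSup {k | ∃ B, M.IsBase B ∧ B.ncard = k}

/-- A circuit of a matroid: a minimal dependent set. -/
def Matroid.IsCircuit' {α : Type*} (M : Matroid α) (C : Set α) : Prop :=
  M.Dep C ∧ ∀ D, D ⊂ C → ¬ M.Dep D

/-- A hyperplane of a matroid: a maximal proper flat. -/
def Matroid.IsHyperplane {α : Type*} (M : Matroid α) (H : Set α) : Prop :=
  M.IsFlat H ∧ H ⊂ M.E ∧ ∀ F, M.IsFlat F → H ⊂ F → F = M.E

/-- A circuit-hyperplane of a matroid: a set that is both a circuit and a hyperplane. -/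
def Matroid.IsCircuitHyperplane {α : Type*} (M : Matroid α) (X : Set α) : Prop :=
  M.IsCircuit' X ∧ M.IsHyperplane X

/-- `W(M)`: the set of circuit-hyperplanes of `M`. -/
def matroidW {α : Type*} (M : Matroid α) : Set (Set α) :=
  {X | M.IsCircuitHyperplane X}

/-- `U(M)`: the dependent subsets of the ground set of cardinality `rk(M)`
that are not circuit-hyperplanes. -/
def matroidU {α : Type*} (M : Matroid α) : Set (Set α) :=
  {X | X.ncard = M.rkt ∧ M.Dep X ∧ ¬ M.IsCircuitHyperplane X}

/-- The set of matroids with ground set `{1, …, n}` (modelled as `Fin n`). -/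
def matroidsOn (n : ℕ) : Set (Matroid (Fin n)) := {M | M.E = Set.univ}

/-- The set of matroids with ground set `{1, …, n}` and rank `r`. -/
def matroidsOnRank (n r : ℕ) : Set (Matroid (Fin n)) :=
  {M | M.E = Set.univ ∧ M.rkt = r}

/-- The Johnson graph `J(E,r)`: vertices are the `r`-element subsets of `E`, and two
vertices `X, Y` are adjacent iff `|X ∩ Y| = r − 1`. -/
def johnsonGraph (α : Type*) [DecidableEq α] (r : ℕ) :
    SimpleGraph {X : Finset α // X.card = r} :=
  SimpleGraph.fromRel (fun X Y => ((X : Finset α) ∩ (Y : Finset α)).card = r - 1)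

/-- `B` is the set of bases of a matroid of rank `r` on the (finite) ground set `α`. -/
def IsBaseSetOf {α : Type*} [Fintype α] (r : ℕ) (B : Set {X : Finset α // X.card = r}) :
    Prop :=
  ∃ M : Matroid α, M.E = Set.univ ∧ M.rkt = r ∧
    ∀ X : {X : Finset α // X.card = r}, (M.IsBase ((X : Finset α) : Set α) ↔ X ∈ B)


/-!
Both directions check the basis exchange axiom for a family of `r`-sets, using that an exchange
`X - a + b` is a neighbour of `X` in `J(E, r)`, and that any two exchanges `X - a + b`,
`X - a + b'` of the same `X` and `a` are neighbours of each other.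

(1) ⇒ (2): let `X, Y ∉ C` for a component `C` of `K`, `a ∈ X \ Y`, and suppose every exchange
`X - a + b` (`b ∈ Y \ X`) lies in `C`. Then `X ∉ K`, since otherwise it would be joined to `C`,
so `X` is a base of the matroid `M` and `H = cl(X - a)` is a hyperplane. If `Y ⊆ H`, all
`r`-subsets of `H` are non-bases, i.e. lie in `K`, and they span a connected subgraph of
`J(E, r)` containing `Y` and an element of `C`; so `Y ∈ C`. Otherwise some `f ∈ Y \ H` gives a
base `X - a + f`, which is not in `K ⊇ C`.

(2) ⇒ (1): if every exchange `X - a + b` of `X, Y ∉ K` lies in `K`, they all lie in one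
component `C`; exchanging `X` against `Y` in the matroid whose bases are the complement of `C`
produces one outside `C`.
-/

open SimpleGraph

lemma Matroid.IsBase.rkt_eq_ncard {α : Type*} {M : Matroid α} {B : Set α} (hB : M.IsBase B) :
    M.rkt = B.ncard := by
  have hks : {k | ∃ B', M.IsBase B' ∧ B'.ncard = k} = {B.ncard} := by
    ext k
    refine ⟨?_, fun hk => ⟨B, hB, hk.symm⟩⟩
    rintro ⟨B', hB', rfl⟩
    exact hB'.ncard_eq_ncard_of_isBase hB
  rw [Matroid.rkt, hks, csSup_singleton]

lemma Matroid.not_isBase_of_subset_closure {α : Type*} {M : Matroid α} {I S : Set α} {e : α}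
    (he : e ∈ M.E) (heI : e ∉ M.closure I) (hS : S ⊆ M.closure I) : ¬ M.IsBase S := fun hB =>
  heI <| M.closure_subset_closure_of_subset_closure hS (hB.closure_eq ▸ he)

lemma Matroid.IsBase.subset_closure_or_exists_isBase_insert {α : Type*} {M : Matroid α}
    {X Y : Set α} {a : α} (hX : M.IsBase X) (ha : a ∈ X) (haY : a ∉ Y) (hY : Y ⊆ M.E) :
    Y ⊆ M.closure (X \ {a}) ∨ ∃ f ∈ Y \ X, M.IsBase (insert f (X \ {a})) := by
  refine or_iff_not_imp_left.2 fun hYH => ?_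
  obtain ⟨f, hfY, hfH⟩ := not_subset.1 hYH
  have hXa : X \ {a} ⊆ M.closure (X \ {a}) :=
    M.subset_closure _ (sdiff_subset.trans hX.subset_ground)
  have hfX : f ∉ X := fun hfX => hfH <| hXa ⟨hfX, fun hfa => haY (hfa ▸ hfY)⟩
  have hind : M.Indep (insert f (X \ {a})) :=
    ((hX.indep.subset sdiff_subset).insert_indep_iff_of_notMem fun h => hfX h.1).2 ⟨hY hfY, hfH⟩
  refine ⟨f, ⟨hfY, hfX⟩,
    insert_isBase_of_insert_indep (fun h => h.2 rfl) (fun h => hfX h.1) ?_ hind⟩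
  rwa [insert_sdiff_singleton, insert_eq_of_mem ha]

lemma SimpleGraph.ConnectedComponent.val_mem_image_supp_of_reachable {V : Type*}
    {G : SimpleGraph V} {K : Set V} (c : (G.induce K).ConnectedComponent) {u v : K}
    (huv : (G.induce K).Reachable u v) (hu : u.1 ∈ Subtype.val '' c.supp) :
    v.1 ∈ Subtype.val '' c.supp := by
  rw [Subtype.val_injective.mem_set_image, c.mem_supp_iff] at hu ⊢
  rw [← ConnectedComponent.sound huv, hu]

lemma IsBaseSetOf.nonempty {α : Type*} [Fintype α] {r : ℕ}
    {𝓑 : Set {X : Finset α // X.card = r}} (h : IsBaseSetOf r 𝓑) : 𝓑.Nonempty := by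
  obtain ⟨M, -, hMr, hM𝓑⟩ := h
  obtain ⟨B, hB⟩ := M.exists_isBase
  have hcard : (toFinite B).toFinset.card = r := by
    rw [← ncard_eq_toFinset_card B, ← hB.rkt_eq_ncard, hMr]
  exact ⟨⟨_, hcard⟩, (hM𝓑 _).1 (by simpa using hB)⟩

section Johnson

variable {α : Type*} [DecidableEq α] {r : ℕ}

namespace johnsonGraph

def swap (X : {X : Finset α // X.card = r}) {a b : α} (ha : a ∈ X.1) (hb : b ∉ X.1) :
    {X : Finset α // X.card = r} :=
  ⟨insert b (X.1.erase a), by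
    rw [Finset.card_insert_of_notMem fun h => hb (Finset.mem_of_mem_erase h),
      Finset.card_erase_add_one ha, X.2]⟩

@[simp]
lemma coe_swap (X : {X : Finset α // X.card = r}) {a b : α} (ha : a ∈ X.1) (hb : b ∉ X.1) :
    ((swap X ha hb).1 : Set α) = insert b ((X.1 : Set α) \ {a}) := by
  simp [swap]

lemma adj_iff {X Y : {X : Finset α // X.card = r}} :
    (johnsonGraph α r).Adj X Y ↔ X ≠ Y ∧ (X.1 ∩ Y.1).card = r - 1 := by
  rw [johnsonGraph, fromRel_adj, Finset.inter_comm Y.1, or_self]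

lemma adj_of_subset_inter {X Y : {X : Finset α // X.card = r}} {S : Finset α}
    (hS : S.card + 1 = r) (hX : S ⊆ X.1) (hY : S ⊆ Y.1) (hne : X ≠ Y) :
    (johnsonGraph α r).Adj X Y := by
  have hle : S.card ≤ (X.1 ∩ Y.1).card := Finset.card_le_card (Finset.subset_inter hX hY)
  have hlt : (X.1 ∩ Y.1).card < X.1.card := by
    refine Finset.card_lt_card (Finset.inter_subset_left.ssubset_of_ne fun h => hne ?_)
    exact Subtype.ext <|
      Finset.eq_of_subset_of_card_le (Finset.inter_eq_left.1 h) (by rw [X.2, Y.2])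
  exact adj_iff.2 ⟨hne, by rw [X.2] at hlt; omega⟩

lemma adj_swap (X : {X : Finset α // X.card = r}) {a b : α} (ha : a ∈ X.1) (hb : b ∉ X.1) :
    (johnsonGraph α r).Adj X (swap X ha hb) := by
  refine adj_of_subset_inter (S := X.1.erase a) (by rw [Finset.card_erase_add_one ha, X.2])
    (Finset.erase_subset a X.1) (Finset.subset_insert b _) fun h => hb ?_
  rw [h]
  exact Finset.mem_insert_self b _

lemma swap_adj_swap (X : {X : Finset α // X.card = r}) {a b b' : α} (ha : a ∈ X.1)
    (hb : b ∉ X.1) (hb' : b' ∉ X.1) (hne : b ≠ b') :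
    (johnsonGraph α r).Adj (swap X ha hb) (swap X ha hb') := by
  refine adj_of_subset_inter (S := X.1.erase a) (by rw [Finset.card_erase_add_one ha, X.2])
    (Finset.subset_insert b _) (Finset.subset_insert b' _) fun h => ?_
  have hb_mem : b ∈ (swap X ha hb').1 := h ▸ Finset.mem_insert_self b _
  rcases Finset.mem_insert.1 hb_mem with hbb' | hbX
  · exact hne hbb'
  · exact hb (Finset.mem_of_mem_erase hbX)

lemma exists_mem_sdiff_of_mem_sdiff {X Y : {X : Finset α // X.card = r}} {a : α}
    (ha : a ∈ X.1) (haY : a ∉ Y.1) : ∃ b ∈ Y.1, b ∉ X.1 := by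
  by_contra! hYX
  exact haY (Finset.eq_of_subset_of_card_le hYX (by rw [X.2, Y.2]) ▸ ha)

lemma reachable_induce_of_forall_subset {K : Set {X : Finset α // X.card = r}} {H : Set α}
    (hK : ∀ Z : {X : Finset α // X.card = r}, (Z.1 : Set α) ⊆ H → Z ∈ K)
    {X Y : {X : Finset α // X.card = r}} (hX : (X.1 : Set α) ⊆ H) (hY : (Y.1 : Set α) ⊆ H) :
    ((johnsonGraph α r).induce K).Reachable ⟨X, hK X hX⟩ ⟨Y, hK Y hY⟩ := by
  induction hn : (X.1 \ Y.1).card using Nat.strong_induction_on generalizing X with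
  | _ n ih =>
  obtain rfl | hXY := eq_or_ne X Y
  · rfl
  obtain ⟨a, haX, haY⟩ : ∃ a ∈ X.1, a ∉ Y.1 := by
    by_contra! hXY'
    exact hXY (Subtype.ext (Finset.eq_of_subset_of_card_le hXY' (by rw [X.2, Y.2])))
  obtain ⟨b, hbY, hbX⟩ := exists_mem_sdiff_of_mem_sdiff haX haY
  have hZ : ((swap X haX hbX).1 : Set α) ⊆ H := by
    rw [coe_swap]
    exact insert_subset (hY hbY) (sdiff_subset.trans hX)
  have hsdiff : (swap X haX hbX).1 \ Y.1 = (X.1 \ Y.1).erase a := by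
    ext c
    simp only [swap, Finset.mem_sdiff, Finset.mem_insert, Finset.mem_erase]
    constructor
    · rintro ⟨rfl | hc, hcY⟩
      exacts [absurd hbY hcY, ⟨hc.1, hc.2, hcY⟩]
    · rintro ⟨hca, hcX, hcY⟩
      exact ⟨Or.inr ⟨hca, hcX⟩, hcY⟩
  have hlt : ((swap X haX hbX).1 \ Y.1).card < n := by
    rw [hsdiff, ← hn]
    exact Finset.card_erase_lt_of_mem (Finset.mem_sdiff.2 ⟨haX, haY⟩)
  exact (induce_adj.2 (adj_swap X haX hbX)).reachable.trans (ih _ hlt hZ rfl)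

end johnsonGraph

open johnsonGraph

variable [Fintype α]

lemma isBaseSetOf_of_exchange {𝓑 : Set {X : Finset α // X.card = r}} (hne : 𝓑.Nonempty)
    (hex : ∀ X ∈ 𝓑, ∀ Y ∈ 𝓑, ∀ a (ha : a ∈ X.1), a ∉ Y.1 →
      ∃ b ∈ Y.1, ∃ hb : b ∉ X.1, swap X ha hb ∈ 𝓑) :
    IsBaseSetOf r 𝓑 := by
  let P : Set α → Prop := fun S => ∃ X ∈ 𝓑, (X.1 : Set α) = S
  have hP : Matroid.ExchangeProperty P := by
    rintro _ _ ⟨X, hX, rfl⟩ ⟨Y, hY, rfl⟩ a ⟨haX, haY⟩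
    obtain ⟨b, hbY, hbX, hZ⟩ := hex X hX Y hY a haX haY
    exact ⟨b, ⟨hbY, hbX⟩, swap X haX hbX, hZ, coe_swap X haX hbX⟩
  obtain ⟨X₀, hX₀⟩ := hne
  let M : Matroid α := Matroid.ofIsBaseOfFinite finite_univ P ⟨_, X₀, hX₀, rfl⟩ hP
    fun B _ => subset_univ B
  have hM𝓑 (X : {X : Finset α // X.card = r}) : M.IsBase X.1 ↔ X ∈ 𝓑 :=
    ⟨fun ⟨Y, hY, hYX⟩ => Subtype.ext (Finset.coe_injective hYX) ▸ hY, fun hX => ⟨X, hX, rfl⟩⟩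
  refine ⟨M, rfl, ?_, hM𝓑⟩
  rw [((hM𝓑 X₀).2 hX₀).rkt_eq_ncard, ncard_coe_finset, X₀.2]

variable {K : Set {X : Finset α // X.card = r}}

lemma IsBaseSetOf.compl_image_supp (hK : IsBaseSetOf r Kᶜ)
    (c : ((johnsonGraph α r).induce K).ConnectedComponent) :
    IsBaseSetOf r (Subtype.val '' c.supp)ᶜ := by
  have hCK : Subtype.val '' c.supp ⊆ K := Subtype.coe_image_subset K c.supp
  refine isBaseSetOf_of_exchange (hK.nonempty.mono (compl_subset_compl.2 hCK)) ?_
  obtain ⟨M, hME, -, hMK⟩ := hK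
  intro X hXC Y hYC a haX haY
  by_contra! hswap
  simp only [mem_compl_iff, not_not] at hswap
  obtain ⟨b₀, hb₀Y, hb₀X⟩ := exists_mem_sdiff_of_mem_sdiff haX haY
  have hZ₀C := hswap b₀ hb₀Y hb₀X
  have hX : M.IsBase X.1 := by
    refine (hMK X).2 fun hXK => hXC ?_
    exact c.val_mem_image_supp_of_reachable (u := ⟨_, hCK hZ₀C⟩) (v := ⟨X, hXK⟩)
      (induce_adj.2 (adj_swap X haX hb₀X).symm).reachable hZ₀C
  rcases hX.subset_closure_or_exists_isBase_insert haX haY (hME ▸ subset_univ _) with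
    hYH | ⟨f, ⟨hfY, hfX⟩, hf⟩
  · have hHK (Z : {X : Finset α // X.card = r}) (hZ : (Z.1 : Set α) ⊆ M.closure (X.1 \ {a})) :
        Z ∈ K := by
      by_contra hZK
      exact M.not_isBase_of_subset_closure (hME ▸ mem_univ a)
        (hX.indep.notMem_closure_sdiff_of_mem haX) hZ ((hMK Z).2 hZK)
    have hZ₀H : ((swap X haX hb₀X).1 : Set α) ⊆ M.closure (X.1 \ {a}) := by
      rw [coe_swap]
      exact insert_subset (hYH hb₀Y) (M.subset_closure _ (hME ▸ subset_univ _))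
    exact hYC (c.val_mem_image_supp_of_reachable
      (reachable_induce_of_forall_subset hHK hZ₀H hYH) hZ₀C)
  · exact (hMK _).1 (by rwa [coe_swap]) (hCK (hswap f hfY hfX))

lemma compl_nonempty_of_forall_component (hr : r ≤ Fintype.card α)
    (h : ∀ c : ((johnsonGraph α r).induce K).ConnectedComponent,
      IsBaseSetOf r (Subtype.val '' c.supp)ᶜ) :
    Kᶜ.Nonempty := by
  by_contra! hK
  have hKuniv (Z : {X : Finset α // X.card = r}) : Z ∈ K := by simpa using congrArg (Z ∈ ·) hK
  obtain ⟨t, -, ht⟩ := Finset.exists_subset_card_eq (s := Finset.univ) (by simpa using hr)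
  let c := ((johnsonGraph α r).induce K).connectedComponentMk ⟨⟨t, ht⟩, hKuniv _⟩
  obtain ⟨W, hW⟩ := (h c).nonempty
  exact hW (c.val_mem_image_supp_of_reachable
    (reachable_induce_of_forall_subset (H := univ) (fun Z _ => hKuniv Z) (subset_univ _)
      (subset_univ _)) ⟨_, rfl, rfl⟩)

lemma isBaseSetOf_compl_of_forall_component (hr : r ≤ Fintype.card α)
    (h : ∀ c : ((johnsonGraph α r).induce K).ConnectedComponent,
      IsBaseSetOf r (Subtype.val '' c.supp)ᶜ) :
    IsBaseSetOf r Kᶜ := by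
  refine isBaseSetOf_of_exchange (compl_nonempty_of_forall_component hr h) ?_
  intro X hXK Y hYK a haX haY
  by_contra! hswap
  simp only [mem_compl_iff, not_not] at hswap
  obtain ⟨b₀, hb₀Y, hb₀X⟩ := exists_mem_sdiff_of_mem_sdiff haX haY
  let c := ((johnsonGraph α r).induce K).connectedComponentMk ⟨_, hswap b₀ hb₀Y hb₀X⟩
  have hCK : Subtype.val '' c.supp ⊆ K := Subtype.coe_image_subset K c.supp
  obtain ⟨M, -, -, hMC⟩ := h c
  obtain ⟨f, ⟨hfY, hfX⟩, hf⟩ :=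
    ((hMC X).2 fun hX => hXK (hCK hX)).exchange ((hMC Y).2 fun hY => hYK (hCK hY)) ⟨haX, haY⟩
  refine (hMC (swap X haX hfX)).1 (by rwa [coe_swap]) ?_
  refine c.val_mem_image_supp_of_reachable (u := ⟨_, hswap b₀ hb₀Y hb₀X⟩)
    (v := ⟨_, hswap f hfY hfX⟩) ?_ ⟨_, rfl, rfl⟩
  obtain rfl | hfb₀ := eq_or_ne f b₀
  · rfl
  · exact (induce_adj.2 (swap_adj_swap X haX hb₀X hfX (Ne.symm hfb₀))).reachable

end Johnson

/-- For a set `K` of vertices of the Johnson graph `J(E,r)`, the complement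
of `K` is the set of bases of a matroid of rank `r` on `E` if and only if for every connected
component `C` of the induced subgraph on `K`, the complement of `C` is the set of bases of a
matroid of rank `r` on `E`. -/
theorem base_set_iff_components {α : Type*} [Fintype α] [DecidableEq α] (r : ℕ)
    (hr : r ≤ Fintype.card α) (K : Set {X : Finset α // X.card = r}) :
    IsBaseSetOf r Kᶜ ↔
      ∀ c : ((johnsonGraph α r).induce K).ConnectedComponent,
        IsBaseSetOf r ((Subtype.val '' c.supp))ᶜ :=
  ⟨IsBaseSetOf.compl_image_supp, isBaseSetOf_compl_of_forall_component hr⟩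
end

section
/- Let E be a finite set with |E| = n, let 0 < r < n, and let S be a set of r-element subsets of E. Then S is a stable set of the Johnson graph J(E,r) if and only if the complement of S within the r-element subsets of E is the set of bases of a sparse paving matroid on E of rank r. -/
open Filter Set

/-- A matroid is paving if all of its circuits have cardinality at least its rank. -/
def Matroid.IsPaving {α : Type*} (M : Matroid α) : Prop :=
  ∀ C, M.IsCircuit' C → M.rkt ≤ C.ncard

/-- A matroid is sparse paving if both it and its dual are paving. -/
def Matroid.IsSparsePaving {α : Type*} (M : Matroid α) : Prop :=
  M.IsPaving ∧ M✶.IsPaving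

/-!
Given a stable set `S`, call independent every set of size `< r` and every `r`-set outside `S`.
Augmentation can only fail if two `r`-sets `I + e`, `I + f` with `|I| = r - 1` both lie in `S`,
and these are adjacent in `J(E,r)`. In this matroid every set of size `< r` is independent and,
since any `r + 1` elements contain an `r`-set outside `S`, every set of size `< n - r` is
coindependent; so it is sparse paving.

Conversely, if two non-bases `X ≠ Y` of a sparse paving matroid met in `r - 1` elements, then
`X ∩ Y` would be independent and both `X` and `Y` would lie in its closure, so `X ∪ Y` would not
be spanning. Its complement, of size `n - r - 1`, would then be dependent in the dual, which
is paving of rank `n - r`.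
-/

namespace Matroid

variable {α : Type*} {M : Matroid α} {B C I X Y : Set α} {e : α}

lemma isCircuit'_iff : M.IsCircuit' C ↔ M.IsCircuit C :=
  Set.minimal_iff_forall_ssubset.symm

lemma IsBase.rkt_eq (hB : M.IsBase B) : M.rkt = B.ncard := by
  have : {k | ∃ B', M.IsBase B' ∧ B'.ncard = k} = {B.ncard} :=
    Set.ext fun k => ⟨fun ⟨B', hB', hk⟩ => hk ▸ hB'.ncard_eq_ncard_of_isBase hB,
      fun hk => ⟨B, hB, hk.symm⟩⟩
  rw [rkt, this, csSup_singleton]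

lemma rkt_dual [M.Finite] : M✶.rkt = M.E.ncard - M.rkt := by
  obtain ⟨B, hB⟩ := M.exists_isBase
  rw [hB.compl_isBase_dual.rkt_eq, hB.rkt_eq,
    Set.ncard_sdiff hB.subset_ground (M.set_finite B hB.subset_ground)]

lemma isBase_iff_indep_ncard_eq_rkt [M.Finite] : M.IsBase B ↔ M.Indep B ∧ B.ncard = M.rkt := by
  refine ⟨fun hB => ⟨hB.indep, hB.rkt_eq.symm⟩, fun ⟨hI, hBr⟩ => ?_⟩
  obtain ⟨B', hB', hBB'⟩ := hI.exists_isBase_superset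
  rwa [Set.eq_of_subset_of_ncard_le hBB' (by rw [← hB'.rkt_eq, hBr])
    (M.set_finite B' hB'.subset_ground)]

lemma isPaving_iff [M.Finite] : M.IsPaving ↔ ∀ I ⊆ M.E, I.ncard < M.rkt → M.Indep I := by
  refine ⟨fun hM I hIE hI => (M.indep_or_dep hIE).resolve_right fun hD => ?_, fun h C hC => ?_⟩
  · obtain ⟨C, hCI, hC⟩ := hD.exists_isCircuit_subset
    have := hM C (isCircuit'_iff.2 hC)
    have := Set.ncard_le_ncard hCI (M.set_finite I)
    omega
  · by_contra! hlt
    exact hC.1.not_indep (h C hC.1.subset_ground hlt)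

lemma Indep.insert_subset_closure (hI : M.Indep I) (he : M.Dep (insert e I)) :
    insert e I ⊆ M.closure I :=
  Set.insert_subset (hI.mem_closure_iff.2 (.inl he)) (M.subset_closure I)

theorem IsSparsePaving.ncard_inter_ne [M.Finite] (hM : M.IsSparsePaving) (hX : M.Dep X)
    (hY : M.Dep Y) (hXr : X.ncard = M.rkt) (hYr : Y.ncard = M.rkt) (hXY : X ≠ Y) :
    (X ∩ Y).ncard ≠ M.rkt - 1 := by
  intro hXYr
  have hXfin := M.set_finite X hX.subset_ground
  have hYfin := M.set_finite Y hY.subset_ground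
  have hr : 0 < M.rkt := by
    by_contra! h0
    exact hXY <| by rw [(Set.ncard_eq_zero hXfin).1 (by omega),
      (Set.ncard_eq_zero hYfin).1 (by omega)]
  have hIfin : (X ∩ Y).Finite := hXfin.inter_of_left Y
  have hI : M.Indep (X ∩ Y) :=
    isPaving_iff.1 hM.1 _ (Set.inter_subset_left.trans hX.subset_ground) (by omega)
  obtain ⟨f, -, hfX⟩ := (Set.exists_eq_insert_iff_ncard hIfin).2
    ⟨Set.inter_subset_left, by omega⟩
  obtain ⟨g, -, hgY⟩ := (Set.exists_eq_insert_iff_ncard hIfin).2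
    ⟨Set.inter_subset_right, by omega⟩
  have hnot : ¬ M.Spanning (X ∪ Y) := by
    intro hsp
    have hcl : X ∪ Y ⊆ M.closure (X ∩ Y) := Set.union_subset
      (hfX.symm.subset.trans (hI.insert_subset_closure (by rwa [hfX])))
      (hgY.symm.subset.trans (hI.insert_subset_closure (by rwa [hgY])))
    have hIsp : M.Spanning (X ∩ Y) := by
      rw [spanning_iff_closure_eq, ← hsp.closure_eq]
      exact (M.closure_subset_closure (Set.inter_subset_left.trans Set.subset_union_left)).antisymm
        (M.closure_subset_closure_of_subset_closure hcl)
    have := (hI.isBase_of_spanning hIsp).rkt_eq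
    omega
  have hunion : (X ∪ Y).ncard = M.rkt + 1 := by
    have := Set.ncard_union_add_ncard_inter _ _ hXfin hYfin
    omega
  have hunionE : X ∪ Y ⊆ M.E := Set.union_subset hX.subset_ground hY.subset_ground
  refine hnot ((spanning_iff_compl_coindep hunionE).2 (isPaving_iff.1 hM.2 _ Set.sdiff_subset ?_))
  rw [rkt_dual, Set.ncard_sdiff hunionE (M.set_finite _ hunionE)]
  have := Set.ncard_le_ncard hunionE M.ground_finite
  omega

end Matroid

section StableFamily

open Set

variable {α : Type*} [Finite α] {r : ℕ} {𝒮 : Set (Set α)} {I J W : Set α}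

lemma exists_insert_notMem_of_pairwise (h𝒮 : 𝒮.Pairwise fun A B => (A ∩ B).ncard ≠ r - 1)
    (hI : I.ncard + 1 = r) (hJI : 1 < (J \ I).ncard) : ∃ e ∈ J \ I, insert e I ∉ 𝒮 := by
  obtain ⟨e, f, he, hf, hef⟩ := (one_lt_ncard_iff).1 hJI
  by_contra! h
  have hfe : f ∉ insert e I := by simp [hef.symm, hf.2]
  refine h𝒮 (h e he) (h f hf) (fun h' => hfe (h' ▸ mem_insert f I)) ?_
  rw [insert_inter_of_notMem (by simp [hef, he.2]), inter_insert_of_notMem hf.2, inter_self]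
  omega

lemma exists_subset_ncard_eq_notMem_of_pairwise
    (h𝒮 : 𝒮.Pairwise fun A B => (A ∩ B).ncard ≠ r - 1) (hr : 0 < r) (hW : r < W.ncard) :
    ∃ B ⊆ W, B.ncard = r ∧ B ∉ 𝒮 := by
  obtain ⟨I, hIW, hI⟩ := exists_subset_card_eq (show r - 1 ≤ W.ncard by omega)
  obtain ⟨e, he, heI⟩ := exists_insert_notMem_of_pairwise h𝒮 (I := I) (J := W) (by omega)
    (by rw [ncard_sdiff hIW]; omega)
  exact ⟨insert e I, insert_subset he.1 hIW, by rw [ncard_insert_of_notMem he.2]; omega, heI⟩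

variable (r 𝒮) in
def SparsePavingIndep (I : Set α) : Prop :=
  I.ncard < r ∨ I.ncard = r ∧ I ∉ 𝒮

lemma SparsePavingIndep.subset (hJ : SparsePavingIndep r 𝒮 J) (hIJ : I ⊆ J) :
    SparsePavingIndep r 𝒮 I := by
  obtain rfl | hIJ := hIJ.eq_or_ssubset
  · exact hJ
  · have := ncard_lt_ncard hIJ
    left
    rcases hJ with hJ | ⟨hJ, -⟩ <;> omega

lemma SparsePavingIndep.exists_insert (h𝒮 : 𝒮.Pairwise fun A B => (A ∩ B).ncard ≠ r - 1)
    (hJ : SparsePavingIndep r 𝒮 J) (hIJ : I.ncard < J.ncard) :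
    ∃ e ∈ J, e ∉ I ∧ SparsePavingIndep r 𝒮 (insert e I) := by
  have hJr : J.ncard ≤ r := by rcases hJ with hJ | ⟨hJ, -⟩ <;> omega
  obtain hsmall | hIr : I.ncard + 1 < r ∨ I.ncard + 1 = r := by omega
  · obtain ⟨e, heJ, heI⟩ := exists_mem_notMem_of_ncard_lt_ncard hIJ
    exact ⟨e, heJ, heI, .inl (by rw [ncard_insert_of_notMem heI]; omega)⟩
  have hJ𝒮 : J.ncard = r ∧ J ∉ 𝒮 := hJ.resolve_left (by omega)
  suffices ∃ e ∈ J \ I, insert e I ∉ 𝒮 by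
    obtain ⟨e, he, he𝒮⟩ := this
    exact ⟨e, he.1, he.2, .inr ⟨by rw [ncard_insert_of_notMem he.2]; omega, he𝒮⟩⟩
  obtain hJI | hJI : 1 < (J \ I).ncard ∨ (J \ I).ncard = 1 := by
    have := le_ncard_sdiff I J
    omega
  · exact exists_insert_notMem_of_pairwise h𝒮 hIr hJI
  obtain ⟨e, he⟩ := ncard_eq_one.1 hJI
  have heJI : e ∈ J \ I := he ▸ mem_singleton e
  have hJeq : J = insert e I := by
    rw [← union_singleton]
    exact eq_of_subset_of_ncard_le (sdiff_subset_iff.1 he.subset)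
      (by rw [union_singleton, ncard_insert_of_notMem heJI.2]; omega)
  exact ⟨e, heJI, hJeq ▸ hJ𝒮.2⟩

variable (r 𝒮) in
/-- The sparse paving matroid of rank `r` on `α` whose non-bases are the `r`-sets in `𝒮`. -/
def sparsePavingMatroid (hr : 0 < r) (h𝒮 : 𝒮.Pairwise fun A B => (A ∩ B).ncard ≠ r - 1) :
    Matroid α :=
  (IndepMatroid.ofFinite finite_univ (SparsePavingIndep r 𝒮) (.inl (by rwa [ncard_empty]))
    (fun _ _ hJ hIJ => hJ.subset hIJ) (fun _ _ _ hJ hIJ => hJ.exists_insert h𝒮 hIJ)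
    (fun I _ => subset_univ I)).matroid

variable {hr : 0 < r} {h𝒮 : 𝒮.Pairwise fun A B => (A ∩ B).ncard ≠ r - 1}

@[simp]
lemma sparsePavingMatroid_ground : (sparsePavingMatroid r 𝒮 hr h𝒮).E = univ := rfl

@[simp]
lemma sparsePavingMatroid_indep_iff :
    (sparsePavingMatroid r 𝒮 hr h𝒮).Indep I ↔ SparsePavingIndep r 𝒮 I :=
  Iff.rfl

lemma sparsePavingMatroid_rkt (hrn : r < Nat.card α) :
    (sparsePavingMatroid r 𝒮 hr h𝒮).rkt = r := by
  obtain ⟨A, -, hA, hA𝒮⟩ := exists_subset_ncard_eq_notMem_of_pairwise h𝒮 hr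
    (W := univ) (by rwa [ncard_univ])
  obtain ⟨B, hB, hAB⟩ :=
    (sparsePavingMatroid_indep_iff.2 (.inr ⟨hA, hA𝒮⟩)).exists_isBase_superset
  have hBr : B.ncard ≤ r := by
    rcases sparsePavingMatroid_indep_iff.1 hB.indep with h | ⟨h, -⟩ <;> omega
  have := ncard_le_ncard hAB
  rw [hB.rkt_eq]
  omega

lemma sparsePavingMatroid_isBase_iff (hrn : r < Nat.card α) :
    (sparsePavingMatroid r 𝒮 hr h𝒮).IsBase B ↔ B.ncard = r ∧ B ∉ 𝒮 := by
  rw [Matroid.isBase_iff_indep_ncard_eq_rkt, sparsePavingMatroid_rkt hrn,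
    sparsePavingMatroid_indep_iff, SparsePavingIndep]
  exact ⟨fun ⟨h, hBr⟩ => h.resolve_left (by omega), fun h => ⟨.inr h, h.1⟩⟩

lemma sparsePavingMatroid_isSparsePaving (hrn : r < Nat.card α) :
    (sparsePavingMatroid r 𝒮 hr h𝒮).IsSparsePaving := by
  refine ⟨Matroid.isPaving_iff.2 fun I _ hI => ?_, Matroid.isPaving_iff.2 fun D _ hD => ?_⟩
  · rw [sparsePavingMatroid_rkt hrn] at hI
    exact sparsePavingMatroid_indep_iff.2 (.inl hI)
  rw [Matroid.rkt_dual, sparsePavingMatroid_rkt hrn, sparsePavingMatroid_ground, ncard_univ] at hD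
  obtain ⟨B, hBD, hB⟩ := exists_subset_ncard_eq_notMem_of_pairwise h𝒮 hr (W := univ \ D)
    (by rw [ncard_sdiff (subset_univ D), ncard_univ]; omega)
  exact (Matroid.coindep_iff_exists (by simp)).2
    ⟨B, (sparsePavingMatroid_isBase_iff hrn).2 hB, hBD⟩

end StableFamily

section JohnsonGraph

variable {α : Type*} [DecidableEq α] {r : ℕ}

lemma johnsonGraph_adj {X Y : {X : Finset α // X.card = r}} :
    (johnsonGraph α r).Adj X Y ↔ X ≠ Y ∧ ((X : Finset α) ∩ Y).card = r - 1 := by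
  rw [johnsonGraph, SimpleGraph.fromRel_adj, Finset.inter_comm (Y : Finset α), or_self]

lemma pairwise_not_johnsonGraph_adj_iff (S : Set {X : Finset α // X.card = r}) :
    S.Pairwise (fun X Y => ¬ (johnsonGraph α r).Adj X Y) ↔
      ((fun X : {X : Finset α // X.card = r} => ((X : Finset α) : Set α)) '' S).Pairwise
        fun A B => (A ∩ B).ncard ≠ r - 1 := by
  rw [Set.InjOn.pairwise_image
    (f := fun X : {X : Finset α // X.card = r} => ((X : Finset α) : Set α))
    (Finset.coe_injective.comp Subtype.coe_injective).injOn]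
  refine forall₅_congr fun X _ Y _ hXY => ?_
  simp [johnsonGraph_adj, hXY, Function.onFun, ← Finset.coe_inter]

end JohnsonGraph

/-- Let `|E| = n` and `0 < r < n`. A set `S` of `r`-element subsets of `E`
is a stable set of the Johnson graph `J(E,r)` if and only if its complement among the
`r`-element subsets is the set of bases of a sparse paving matroid of rank `r` on `E`. -/
theorem stable_iff_sparse_paving {α : Type*} [Fintype α] [DecidableEq α] {n r : ℕ}
    (hn : Fintype.card α = n) (hr0 : 0 < r) (hrn : r < n)
    (S : Set {X : Finset α // X.card = r}) :
    S.Pairwise (fun X Y => ¬ (johnsonGraph α r).Adj X Y) ↔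
      ∃ M : Matroid α, M.E = Set.univ ∧ M.rkt = r ∧ M.IsSparsePaving ∧
        ∀ X : {X : Finset α // X.card = r},
          (M.IsBase ((X : Finset α) : Set α) ↔ X ∉ S) := by
  have hcoe : Function.Injective
      fun X : {X : Finset α // X.card = r} => ((X : Finset α) : Set α) :=
    Finset.coe_injective.comp Subtype.coe_injective
  have hcard (X : {X : Finset α // X.card = r}) : ((X : Finset α) : Set α).ncard = r := by
    rw [Set.ncard_coe_finset, X.2]
  rw [pairwise_not_johnsonGraph_adj_iff]
  constructor
  · intro hS
    have hrα : r < Nat.card α := by rwa [Nat.card_eq_fintype_card, hn]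
    refine ⟨sparsePavingMatroid r _ hr0 hS, rfl, sparsePavingMatroid_rkt hrα,
      sparsePavingMatroid_isSparsePaving hrα, fun X => ?_⟩
    rw [sparsePavingMatroid_isBase_iff hrα, hcoe.mem_set_image, and_iff_right (hcard X)]
  · rintro ⟨M, hE, rfl, hM, hB⟩ _ ⟨X, hX, rfl⟩ _ ⟨Y, hY, rfl⟩ hXY
    have hdep (Z) (hZ : Z ∈ S) : M.Dep ((Z : Finset α) : Set α) :=
      (M.not_indep_iff (hE ▸ Set.subset_univ _)).1 fun hZi =>
        (hB Z).1 (Matroid.isBase_iff_indep_ncard_eq_rkt.2 ⟨hZi, hcard Z⟩) hZ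
    exact hM.ncard_inter_ne (hdep X hX) (hdep Y hY) (hcard X) (hcard Y) hXY
end

section
/- Let G = (V,E) be a finite graph that is regular of degree d ≥ 1 and whose adjacency matrix has smallest eigenvalue −λ, and let N = |V|. Set σ = (ln(d+1)+1)/(d+λ) and α = λ/(d+λ). Then the number i(G) of stable sets of G satisfies i(G) ≤ (Σ_{i=0}^{⌈σN⌉} C(N,i)) · 2^{αN}. -/
open Filter Set

/-- `−λ` is the smallest eigenvalue of the adjacency matrix of `G`. -/
def SmallestAdjEigenvalue {V : Type*} [Fintype V] [DecidableEq V]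
    (G : SimpleGraph V) [DecidableRel G.Adj] (lam : ℝ) : Prop :=
  Module.End.HasEigenvalue (Matrix.toLin' (G.adjMatrix ℝ)) (-lam) ∧
    ∀ μ : ℝ, Module.End.HasEigenvalue (Matrix.toLin' (G.adjMatrix ℝ)) μ → -lam ≤ μ

/-!
Container method. Given a stable set `I`, repeatedly take a vertex `v` of maximum degree inside
the current candidate set `C` (initially `V`): if `v ∈ I`, record `v` and delete `v` and its
neighbours from `C`, otherwise delete `v` alone; stop once `|C| ≤ αN`. The recorded set `T ⊆ I`
determines the whole run, hence the final `C`, and `I ⊆ T ∪ C`; so `I` is determined by `T` and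
a subset of the final `C`, and `i(G)` is at most the number of possible `T` times `2^{αN}`.

To bound `|T|`, Hoffman's argument with the test vector `N·1_C − |C|·1` shows that `C` has a
vertex with at least `((d+λ)|C| − λN)/N` neighbours in `C`. Hence every recorded vertex
multiplies the potential `(d+λ)(|C| − αN) + N` by at most `1 − (d+λ)/N ≤ exp(−(d+λ)/N)`. The
potential starts at `(d+1)N` and exceeds `N` as long as the algorithm runs, so `|T| ≤ ⌈σN⌉`.
-/

open Finset Matrix

theorem Matrix.IsHermitian.mul_dotProduct_self_le {n : Type*} [Fintype n] [DecidableEq n]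
    {A : Matrix n n ℝ} (hA : A.IsHermitian) {c : ℝ}
    (hc : ∀ μ, Module.End.HasEigenvalue (toLin' A) μ → c ≤ μ) (x : n → ℝ) :
    c * (x ⬝ᵥ x) ≤ x ⬝ᵥ (A *ᵥ x) := by
  have hpsd : (A - algebraMap ℝ _ c).PosSemidef := by
    refine posSemidef_iff_isHermitian_and_spectrum_nonneg.2
      ⟨hA.sub (isHermitian_diagonal _), ?_⟩
    rw [← spectrum.sub_singleton_eq]
    rintro _ ⟨μ, hμ, _, rfl, rfl⟩
    rw [← spectrum_toLin', ← Module.End.hasEigenvalue_iff_mem_spectrum] at hμ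
    exact sub_nonneg.2 (hc μ hμ)
  have := hpsd.dotProduct_mulVec_nonneg x
  rw [Algebra.algebraMap_eq_smul_one, sub_mulVec, smul_mulVec, one_mulVec, dotProduct_sub,
    dotProduct_smul, star_trivial, smul_eq_mul] at this
  linarith

theorem Matrix.IsHermitian.le_apply_self {n : Type*} [Fintype n] [DecidableEq n]
    {A : Matrix n n ℝ} (hA : A.IsHermitian) {c : ℝ}
    (hc : ∀ μ, Module.End.HasEigenvalue (toLin' A) μ → c ≤ μ) (i : n) : c ≤ A i i := by
  simpa using hA.mul_dotProduct_self_le hc (Pi.single i 1)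

theorem Real.lt_log_div_mul_of_lt_mul_exp_pow {n t c : ℝ} (hn : 0 < n) (ht : 0 < t) {j : ℕ}
    (h : n < c * n * Real.exp (-(t / n)) ^ j) : (j : ℝ) < Real.log c / t * n := by
  rw [← Real.exp_nat_mul, mul_right_comm, lt_mul_iff_one_lt_left hn] at h
  have hc : 0 < c := pos_of_mul_pos_left (one_pos.trans h) (Real.exp_pos _).le
  have : j * (t / n) < Real.log c := by
    rw [mul_neg, Real.exp_neg, ← div_eq_mul_inv, one_lt_div (Real.exp_pos _)] at h
    exact (Real.lt_log_iff_exp_lt hc).2 h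
  rw [mul_div_assoc', div_lt_iff₀ hn] at this
  rw [div_mul_eq_mul_div, lt_div_iff₀ ht]
  linarith

theorem ncard_le_sum_choose_mul_two_pow {V : Type*} [Fintype V] [DecidableEq V]
    (𝓢 : Set (Set V)) (K k : ℕ) (f : Finset V → Finset V) (hf : ∀ T, #(f T) ≤ k)
    (h𝓢 : ∀ S ∈ 𝓢, ∃ T r : Finset V, #T ≤ K ∧ r ⊆ f T ∧ S = ↑(T ∪ r)) :
    𝓢.ncard ≤ (∑ i ∈ range (K + 1), (Fintype.card V).choose i) * 2 ^ k := by
  set F : Finset (Finset V) := (range (K + 1)).biUnion fun i =>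
    (powersetCard i univ).biUnion fun T => (f T).powerset.image (T ∪ ·)
  have hsub : 𝓢 ⊆ (↑) '' (F : Set (Finset V)) := by
    intro S hS
    obtain ⟨T, r, hT, hr, rfl⟩ := h𝓢 S hS
    refine ⟨T ∪ r, ?_, rfl⟩
    simp only [F, coe_biUnion, Set.mem_iUnion, mem_coe, Finset.mem_range, mem_powersetCard,
      Finset.mem_image, Finset.mem_powerset]
    exact ⟨#T, by omega, T, ⟨subset_univ T, rfl⟩, r, hr, rfl⟩
  have hF : #F ≤ (∑ i ∈ range (K + 1), (Fintype.card V).choose i) * 2 ^ k := by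
    rw [sum_mul]
    refine card_biUnion_le.trans (sum_le_sum fun i _ => card_biUnion_le.trans ?_)
    rw [← card_univ, ← card_powersetCard, ← smul_eq_mul, ← sum_const]
    refine sum_le_sum fun T _ => card_image_le.trans ?_
    rw [card_powerset]
    exact Nat.pow_le_pow_right two_pos (hf T)
  calc 𝓢.ncard ≤ ((↑) '' (F : Set (Finset V))).ncard :=
        Set.ncard_le_ncard hsub (Set.toFinite _)
    _ ≤ (F : Set (Finset V)).ncard := Set.ncard_image_le F.finite_toSet
    _ ≤ _ := by rw [Set.ncard_coe_finset]; exact hF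

namespace SimpleGraph

variable {V : Type*} (G : SimpleGraph V) [DecidableRel G.Adj]

def degreeIn (C : Finset V) (v : V) : ℕ := #{u ∈ C | G.Adj v u}

noncomputable def maxDegreeVertex (C : Finset V) (h : C.Nonempty) : V :=
  (C.exists_max_image (G.degreeIn C) h).choose

theorem maxDegreeVertex_mem (C : Finset V) (h : C.Nonempty) : G.maxDegreeVertex C h ∈ C :=
  (C.exists_max_image (G.degreeIn C) h).choose_spec.1

theorem degreeIn_le_degreeIn_maxDegreeVertex {C : Finset V} (h : C.Nonempty) {v : V}
    (hv : v ∈ C) : G.degreeIn C v ≤ G.degreeIn C (G.maxDegreeVertex C h) :=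
  (C.exists_max_image (G.degreeIn C) h).choose_spec.2 v hv

variable [DecidableEq V]

theorem sdiff_insert_filter_adj_ssubset {C : Finset V} {v : V} (hv : v ∈ C) :
    C \ insert v {u ∈ C | G.Adj v u} ⊂ C :=
  sdiff_ssubset (insert_subset hv (filter_subset _ _)) (insert_nonempty _ _)

theorem card_sdiff_insert_filter_adj {C : Finset V} {v : V} (hv : v ∈ C) :
    #(C \ insert v {u ∈ C | G.Adj v u}) + G.degreeIn C v + 1 = #C := by
  have hsub : insert v {u ∈ C | G.Adj v u} ⊆ C := insert_subset hv (filter_subset _ _)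
  have hnot : v ∉ {u ∈ C | G.Adj v u} := fun h => G.irrefl (mem_filter.1 h).2
  have := Finset.card_le_card hsub
  rw [card_insert_of_notMem hnot] at this
  rw [card_sdiff_of_subset hsub, card_insert_of_notMem hnot, degreeIn]
  omega

/-- The container algorithm with threshold `k`, steered by `S` and started from `C`: the first
component is the set of recorded vertices (the vertices of `S` it picks), the second the final
candidate set. -/
noncomputable def containerRun (k : ℕ) (S C : Finset V) : Finset V × Finset V :=
  if h : #C ≤ k then (∅, C) else
    let v := G.maxDegreeVertex C (card_pos.1 (by omega))
    if v ∈ S then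
      let r := containerRun k S (C \ insert v {u ∈ C | G.Adj v u})
      (insert v r.1, r.2)
    else containerRun k S (C.erase v)
termination_by #C
decreasing_by
  · exact card_lt_card (G.sdiff_insert_filter_adj_ssubset (G.maxDegreeVertex_mem _ _))
  · exact card_lt_card (erase_ssubset (G.maxDegreeVertex_mem _ _))

variable (k : ℕ) {S C : Finset V}

theorem containerRun_of_card_le (h : #C ≤ k) : G.containerRun k S C = (∅, C) := by
  rw [containerRun, dif_pos h]

theorem containerRun_of_lt (h : k < #C) (hC : C.Nonempty) :
    G.containerRun k S C =
      if G.maxDegreeVertex C hC ∈ S then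
        (insert (G.maxDegreeVertex C hC) (G.containerRun k S (C \
            insert (G.maxDegreeVertex C hC) {u ∈ C | G.Adj (G.maxDegreeVertex C hC) u})).1,
          (G.containerRun k S (C \
            insert (G.maxDegreeVertex C hC) {u ∈ C | G.Adj (G.maxDegreeVertex C hC) u})).2)
      else G.containerRun k S (C.erase (G.maxDegreeVertex C hC)) := by
  rw [containerRun, dif_neg h.not_ge]

theorem containerRun_fst_subset (S C : Finset V) : (G.containerRun k S C).1 ⊆ S ∩ C := by
  induction C using Finset.strongInduction with
  | H C ih =>
    obtain hk | hk := le_or_gt #C k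
    · simp [G.containerRun_of_card_le k hk]
    have hC : C.Nonempty := card_pos.1 (by omega)
    have hvC := G.maxDegreeVertex_mem C hC
    rw [G.containerRun_of_lt k hk hC]
    set v := G.maxDegreeVertex C hC
    split_ifs with hv
    · refine insert_subset (mem_inter.2 ⟨hv, hvC⟩) ?_
      exact (ih _ (G.sdiff_insert_filter_adj_ssubset hvC)).trans
        (inter_subset_inter_left sdiff_subset)
    · exact (ih _ (erase_ssubset hvC)).trans (inter_subset_inter_left (erase_subset _ _))

theorem card_containerRun_snd_le (S C : Finset V) : #(G.containerRun k S C).2 ≤ k := by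
  induction C using Finset.strongInduction with
  | H C ih =>
    obtain hk | hk := le_or_gt #C k
    · rwa [G.containerRun_of_card_le k hk]
    have hC : C.Nonempty := card_pos.1 (by omega)
    have hvC := G.maxDegreeVertex_mem C hC
    rw [G.containerRun_of_lt k hk hC]
    split_ifs
    · exact ih _ (G.sdiff_insert_filter_adj_ssubset hvC)
    · exact ih _ (erase_ssubset hvC)

theorem containerRun_congr {S S' : Finset V} (C : Finset V)
    (h : ∀ v ∈ C, v ∈ S ↔ v ∈ S') :
    G.containerRun k S C = G.containerRun k S' C := by
  induction C using Finset.strongInduction with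
  | H C ih =>
    obtain hk | hk := le_or_gt #C k
    · rw [G.containerRun_of_card_le k hk, G.containerRun_of_card_le k hk]
    have hC : C.Nonempty := card_pos.1 (by omega)
    have hvC := G.maxDegreeVertex_mem C hC
    rw [G.containerRun_of_lt k hk hC, G.containerRun_of_lt k hk hC, if_congr (h _ hvC) rfl rfl]
    split_ifs
    · rw [ih _ (G.sdiff_insert_filter_adj_ssubset hvC) fun v hv => h v (sdiff_subset hv)]
    · exact ih _ (erase_ssubset hvC) fun v hv => h v (mem_of_mem_erase hv)

theorem containerRun_containerRun_fst (S C : Finset V) :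
    G.containerRun k (G.containerRun k S C).1 C = G.containerRun k S C := by
  induction C using Finset.strongInduction with
  | H C ih =>
    obtain hk | hk := le_or_gt #C k
    · rw [G.containerRun_of_card_le k hk, G.containerRun_of_card_le k hk]
    have hC : C.Nonempty := card_pos.1 (by omega)
    have hvC := G.maxDegreeVertex_mem C hC
    rw [G.containerRun_of_lt k hk hC (S := S)]
    set v := G.maxDegreeVertex C hC
    split_ifs with hv
    · set C' := C \ insert v {u ∈ C | G.Adj v u}
      have hvC' : v ∉ C' := fun h => (mem_sdiff.1 h).2 (mem_insert_self _ _)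
      rw [G.containerRun_of_lt k hk hC, if_pos (mem_insert_self _ _),
        G.containerRun_congr k (S' := (G.containerRun k S C').1) C'
          fun u hu => by simp [ne_of_mem_of_not_mem hu hvC'],
        ih _ (G.sdiff_insert_filter_adj_ssubset hvC)]
    · have hvT : v ∉ (G.containerRun k S (C.erase v)).1 := fun h =>
        hv (mem_inter.1 (G.containerRun_fst_subset k S _ h)).1
      rw [G.containerRun_of_lt k hk hC, if_neg hvT, ih _ (erase_ssubset hvC)]

theorem inter_subset_containerRun (hS : G.IsIndepSet (S : Set V)) (C : Finset V) :
    S ∩ C ⊆ (G.containerRun k S C).1 ∪ (G.containerRun k S C).2 := by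
  induction C using Finset.strongInduction with
  | H C ih =>
    obtain hk | hk := le_or_gt #C k
    · rw [G.containerRun_of_card_le k hk]
      exact inter_subset_right.trans subset_union_right
    have hC : C.Nonempty := card_pos.1 (by omega)
    have hvC := G.maxDegreeVertex_mem C hC
    rw [G.containerRun_of_lt k hk hC]
    set v := G.maxDegreeVertex C hC
    split_ifs with hv
    · intro u hu
      obtain ⟨huS, huC⟩ := mem_inter.1 hu
      obtain rfl | huv := eq_or_ne u v
      · exact mem_union_left _ (mem_insert_self _ _)
      have huC' : u ∈ S ∩ (C \ insert v {w ∈ C | G.Adj v w}) := by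
        simp [huS, huC, huv, hS hv huS huv.symm]
      have := ih _ (G.sdiff_insert_filter_adj_ssubset hvC) huC'
      simp only [Finset.mem_union] at this ⊢
      exact this.imp_left (mem_insert_of_mem ·)
    · refine fun u hu => ih _ (erase_ssubset hvC) ?_
      obtain ⟨huS, huC⟩ := mem_inter.1 hu
      exact mem_inter.2 ⟨huS, mem_erase.2 ⟨ne_of_mem_of_not_mem huS hv, huC⟩⟩

theorem lt_mul_pow_of_card_containerRun_fst {t a n ρ : ℝ} (ht : 0 < t) (hn : 0 < n)
    (hka : a < k + 1) (hρ : 0 ≤ ρ) (hρt : 1 - t / n ≤ ρ)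
    (hdeg : ∀ C (hC : C.Nonempty), t * (#C - a) ≤ n * G.degreeIn C (G.maxDegreeVertex C hC))
    (S C : Finset V) {j : ℕ} (hj : #(G.containerRun k S C).1 = j + 1) :
    n < (t * (#C - a) + n) * ρ ^ j := by
  induction C using Finset.strongInduction generalizing j with
  | H C ih =>
    obtain hk | hk := le_or_gt #C k
    · simp [G.containerRun_of_card_le k hk] at hj
    have hC : C.Nonempty := card_pos.1 (by omega)
    have hvC := G.maxDegreeVertex_mem C hC
    have haC : a < #C := hka.trans_le (by exact_mod_cast hk)
    have hdegC := hdeg C hC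
    rw [G.containerRun_of_lt k hk hC] at hj
    set v := G.maxDegreeVertex C hC
    split_ifs at hj with hv
    · set C' := C \ insert v {u ∈ C | G.Adj v u}
      have hcard : (#C' : ℝ) + G.degreeIn C v + 1 = #C := by
        exact_mod_cast G.card_sdiff_insert_filter_adj hvC
      have hvT : v ∉ (G.containerRun k S C').1 := fun h =>
        (mem_sdiff.1 (mem_inter.1 (G.containerRun_fst_subset k S C' h)).2).2
          (mem_insert_self _ _)
      rw [card_insert_of_notMem hvT, add_left_inj] at hj
      have hY : n < t * (#C - a) + n := by nlinarith
      have hstep : t * (#C' - a) + n ≤ ρ * (t * (#C - a) + n) := by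
        have : n * (t * (#C' - a) + n) ≤ (n - t) * (t * (#C - a) + n) := by
          linear_combination mul_le_mul_of_nonneg_left hdegC ht.le + (n * t) * hcard
        calc t * (#C' - a) + n ≤ (1 - t / n) * (t * (#C - a) + n) := by
              rw [one_sub_div hn.ne', div_mul_eq_mul_div, le_div_iff₀ hn]; linarith
          _ ≤ ρ * (t * (#C - a) + n) := by gcongr
      cases j with
      | zero => simpa using hY
      | succ j =>
        calc n < (t * (#C' - a) + n) * ρ ^ j :=
              ih C' (G.sdiff_insert_filter_adj_ssubset hvC) hj
          _ ≤ ρ * (t * (#C - a) + n) * ρ ^ j := by gcongr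
          _ = (t * (#C - a) + n) * ρ ^ (j + 1) := by ring
    · calc n < (t * (#(C.erase v) - a) + n) * ρ ^ j := ih _ (erase_ssubset hvC) hj
        _ ≤ (t * (#C - a) + n) * ρ ^ j := by gcongr; exact erase_subset _ _

variable [Fintype V]

theorem sdiff_subset_containerRun_snd (hS : G.IsIndepSet (S : Set V)) :
    S \ (G.containerRun k S univ).1 ⊆ (G.containerRun k (G.containerRun k S univ).1 univ).2 := by
  rw [containerRun_containerRun_fst]
  intro u hu
  obtain ⟨huS, huT⟩ := mem_sdiff.1 hu
  have := G.inter_subset_containerRun k hS univ (mem_inter.2 ⟨huS, mem_univ u⟩)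
  exact (mem_union.1 this).resolve_left huT

theorem adjMatrix_mulVec_indicator (C : Finset V) :
    G.adjMatrix ℝ *ᵥ (fun v => if v ∈ C then 1 else 0) = fun v => (G.degreeIn C v : ℝ) := by
  ext v
  rw [adjMatrix_mulVec_apply, sum_boole, degreeIn]
  congr 2
  ext u
  simp [and_comm]

section Spectral

variable {G} [Nonempty V] {d : ℕ} (hreg : G.IsRegularOfDegree d) {lam : ℝ}
  (hlam : ∀ μ, Module.End.HasEigenvalue (toLin' (G.adjMatrix ℝ)) μ → -lam ≤ μ)
include hreg hlam

theorem IsRegularOfDegree.mul_card_sub_le_sum_degreeIn (C : Finset V) :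
    ((d + lam) * #C - lam * Fintype.card V) * #C ≤
      Fintype.card V * ∑ v ∈ C, (G.degreeIn C v : ℝ) := by
  set N : ℝ := (Fintype.card V : ℝ)
  set χ : V → ℝ := fun v => if v ∈ C then 1 else 0
  have hA1 : G.adjMatrix ℝ *ᵥ 1 = (d : ℝ) • 1 := by ext v; simp [hreg v]
  have h1A : (1 : V → ℝ) ᵥ* G.adjMatrix ℝ = (d : ℝ) • 1 := by
    rw [← mulVec_transpose, transpose_adjMatrix, hA1]
  have hχ1 : χ ⬝ᵥ 1 = #C := by simp [χ, dotProduct]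
  have hχχ : χ ⬝ᵥ χ = #C := by simp [χ, dotProduct]
  have h11 : (1 : V → ℝ) ⬝ᵥ 1 = N := by simp [N, dotProduct]
  have hχAχ : χ ⬝ᵥ (G.adjMatrix ℝ *ᵥ χ) = ∑ v ∈ C, (G.degreeIn C v : ℝ) := by
    rw [G.adjMatrix_mulVec_indicator C]; simp [χ, dotProduct]
  have h1Aχ : (1 : V → ℝ) ⬝ᵥ (G.adjMatrix ℝ *ᵥ χ) = d * #C := by
    rw [dotProduct_mulVec, h1A, smul_dotProduct, dotProduct_comm, hχ1, smul_eq_mul]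
  have hAx : G.adjMatrix ℝ *ᵥ (N • χ - (#C : ℝ) • 1) =
      N • G.adjMatrix ℝ *ᵥ χ - (#C * d : ℝ) • 1 := by
    rw [mulVec_sub, mulVec_smul, mulVec_smul, hA1, smul_smul]
  have key := (G.isHermitian_adjMatrix ℝ).mul_dotProduct_self_le hlam
    (N • χ - (#C : ℝ) • 1)
  rw [hAx] at key
  simp only [dotProduct_sub, sub_dotProduct, dotProduct_smul, smul_dotProduct, smul_eq_mul,
    hχ1, hχχ, h11, hχAχ, h1Aχ, dotProduct_comm 1 χ] at key
  refine le_of_mul_le_mul_left ?_ (by positivity : (0 : ℝ) < N)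
  linear_combination key

theorem IsRegularOfDegree.mul_card_sub_le_degreeIn_maxDegreeVertex {C : Finset V}
    (hC : C.Nonempty) :
    (d + lam) * #C - lam * Fintype.card V ≤
      Fintype.card V * G.degreeIn C (G.maxDegreeVertex C hC) := by
  have hsum :
      ∑ v ∈ C, (G.degreeIn C v : ℝ) ≤ #C * G.degreeIn C (G.maxDegreeVertex C hC) := by
    exact_mod_cast sum_le_card_nsmul _ _ _ fun v hv =>
      G.degreeIn_le_degreeIn_maxDegreeVertex hC hv
  refine le_of_mul_le_mul_right ?_ (by exact_mod_cast card_pos.2 hC : (0 : ℝ) < #C)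
  calc _ ≤ Fintype.card V * ∑ v ∈ C, (G.degreeIn C v : ℝ) :=
        hreg.mul_card_sub_le_sum_degreeIn hlam C
    _ ≤ Fintype.card V * (#C * G.degreeIn C (G.maxDegreeVertex C hC)) := by gcongr
    _ = _ := by ring

theorem IsRegularOfDegree.card_containerRun_fst_le (ht : 0 < d + lam) (S : Finset V) :
    #(G.containerRun ⌊lam / (d + lam) * Fintype.card V⌋₊ S univ).1 ≤
      ⌈(Real.log (d + 1) + 1) / (d + lam) * Fintype.card V⌉₊ := by
  set N : ℝ := (Fintype.card V : ℝ)
  have hN : 0 < N := by positivity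
  have hta : (d + lam) * (lam / (d + lam) * N) = lam * N := by field_simp
  cases hj : #(G.containerRun ⌊lam / (d + lam) * N⌋₊ S univ).1 with
  | zero => exact Nat.zero_le _
  | succ j =>
    have hpot := G.lt_mul_pow_of_card_containerRun_fst _ ht hN (Nat.lt_floor_add_one _)
      (Real.exp_pos _).le (by rw [sub_eq_neg_add]; exact Real.add_one_le_exp _)
      (fun C hC => by
        rw [mul_sub, hta]; exact hreg.mul_card_sub_le_degreeIn_maxDegreeVertex hlam hC)
      S univ hj
    rw [card_univ, mul_sub, hta, show (d + lam) * N - lam * N + N = (d + 1) * N by ring] at hpot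
    rw [Nat.add_one_le_ceil_iff]
    calc (j : ℝ) < Real.log (d + 1) / (d + lam) * N :=
          Real.lt_log_div_mul_of_lt_mul_exp_pow hN ht hpot
      _ ≤ (Real.log (d + 1) + 1) / (d + lam) * N := by gcongr; linarith

end Spectral

end SimpleGraph

/-- For a `d`-regular graph `G` (`d ≥ 1`) on `N` vertices with smallest
adjacency eigenvalue `−λ`, the number of stable sets `i(G)` satisfies
`i(G) ≤ (Σ_{i=0}^{⌈σN⌉} C(N,i)) · 2^{αN}`, where `σ = (ln(d+1)+1)/(d+λ)` and
`α = λ/(d+λ)`. -/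
theorem count_stable_sets {V : Type*} [Fintype V] [DecidableEq V]
    (G : SimpleGraph V) [DecidableRel G.Adj] (d : ℕ) (hd : 1 ≤ d)
    (hreg : G.IsRegularOfDegree d) (lam : ℝ) (hlam : SmallestAdjEigenvalue G lam) :
    (({S : Set V | S.Pairwise (fun u v => ¬ G.Adj u v)}).ncard : ℝ) ≤
      (∑ i ∈ Finset.range
          (⌈(Real.log (d + 1) + 1) / (d + lam) * (Fintype.card V : ℝ)⌉₊ + 1),
          ((Fintype.card V).choose i : ℝ)) *
        (2 : ℝ) ^ (lam / (d + lam) * (Fintype.card V : ℝ)) := by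
  obtain ⟨v, -⟩ := Function.ne_iff.1 hlam.1.exists_hasEigenvector.choose_spec.2
  have : Nonempty V := ⟨v⟩
  have hlam0 : 0 ≤ lam := by simpa using (G.isHermitian_adjMatrix ℝ).le_apply_self hlam.2 v
  have ht : 0 < (d : ℝ) + lam := by
    have : (1 : ℝ) ≤ d := by exact_mod_cast hd
    linarith
  set k := ⌊lam / (d + lam) * (Fintype.card V : ℝ)⌋₊
  have hcount := ncard_le_sum_choose_mul_two_pow {S : Set V | S.Pairwise (fun u v => ¬ G.Adj u v)}
    _ k (fun T => (G.containerRun k T univ).2) (G.card_containerRun_snd_le k · univ)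
    fun S (hS : G.IsIndepSet S) => by
      set s := S.toFinite.toFinset
      have hs : G.IsIndepSet (s : Set V) := by rwa [Set.Finite.coe_toFinset]
      refine ⟨_, _, hreg.card_containerRun_fst_le hlam.2 ht s,
        G.sdiff_subset_containerRun_snd k hs, ?_⟩
      rw [union_sdiff_of_subset fun u hu => (mem_inter.1 (G.containerRun_fst_subset k s univ hu)).1,
        Set.Finite.coe_toFinset]
  have hpow : (2 : ℝ) ^ k ≤ 2 ^ (lam / (d + lam) * (Fintype.card V : ℝ)) := by
    rw [← Real.rpow_natCast]
    exact Real.rpow_le_rpow_of_exponent_le one_le_two (Nat.floor_le (by positivity))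
  refine (Nat.cast_le.2 hcount).trans ?_
  push_cast
  gcongr
end

section
/- Let G = (V,E) be a finite vertex-transitive graph and let U ⊆ V be nonempty. Then log₂ i(G) / |V| ≤ log₂ i(G[U]) / |U|, where G[U] is the subgraph of G induced on U; equivalently, i(G)^{|U|} ≤ i(G[U])^{|V|}. -/
/-!
The images `φ U` of `U` under the automorphisms `φ` of `G` cover every vertex equally often,
namely `t = |Aut G| |U| / |V|` times. Shearer's lemma for this cover, applied to the family of
stable sets, gives `i(G) ^ t ≤ ∏_φ i(G[φ U]) = i(G[U]) ^ |Aut G|`, because stable sets are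
closed under taking subsets (so their traces on `φ U` are the stable sets inside `φ U`) and
under automorphisms.

Shearer's lemma is proved by induction on the ground set: removing a point `a` splits a family
into the members avoiding `a` and those containing it, and on each set `A` of the cover containing
`a` the traces of the two parts have total size at most that of the whole family. The two
inductive bounds are recombined by the superadditivity of the geometric mean over any `t` of those
sets, which comes from AM-GM.
-/

open Finset
open scoped NNReal

theorem Nat.pow_le_pow_of_pow_le_pow_of_mul_eq {a b t n p q : ℕ} (h : a ^ t ≤ b ^ n) (hn : n ≠ 0)
    (htn : t * p = n * q) : a ^ q ≤ b ^ p := by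
  rw [← Nat.pow_le_pow_iff_left hn, ← pow_mul, ← pow_mul, mul_comm q, ← htn, pow_mul, mul_comm,
    pow_mul]
  exact Nat.pow_le_pow_left h p

namespace NNReal

variable {ι : Type*}

theorem geom_mean_add_geom_mean_le (s : Finset ι) (hs : s.Nonempty) (f g : ι → ℝ≥0) :
    (∏ i ∈ s, f i) ^ (#s : ℝ)⁻¹ + (∏ i ∈ s, g i) ^ (#s : ℝ)⁻¹ ≤
      (∏ i ∈ s, (f i + g i)) ^ (#s : ℝ)⁻¹ := by
  have hr : 0 < (#s : ℝ)⁻¹ := by positivity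
  by_cases hzero : ∃ i ∈ s, f i + g i = 0
  · obtain ⟨i, hi, hfg⟩ := hzero
    rw [prod_eq_zero hi (add_eq_zero.mp hfg).1, prod_eq_zero hi (add_eq_zero.mp hfg).2,
      zero_rpow hr.ne', add_zero]
    positivity
  push Not at hzero
  set P := ∏ i ∈ s, (f i + g i)
  set w : ℝ≥0 := (#s : ℝ≥0)⁻¹
  have hw : ∑ _i ∈ s, w = 1 := by
    rw [sum_const, nsmul_eq_mul]; exact mul_inv_cancel₀ (by simpa using hs.ne_empty)
  have amgm (h : ι → ℝ≥0) :
      (∏ i ∈ s, h i) ^ (#s : ℝ)⁻¹ ≤ P ^ (#s : ℝ)⁻¹ * ∑ i ∈ s, w * (h i / (f i + g i)) := by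
    have hsplit : ∏ i ∈ s, h i = P * ∏ i ∈ s, h i / (f i + g i) := by
      rw [← prod_mul_distrib]
      exact prod_congr rfl fun i hi => (mul_div_cancel₀ _ (hzero i hi)).symm
    rw [hsplit, mul_rpow, ← finsetProd_rpow s fun i => h i / (f i + g i)]
    gcongr
    have hwr : ((w : ℝ≥0) : ℝ) = (#s : ℝ)⁻¹ := by simp [w]
    simpa only [hwr] using geom_mean_le_arith_mean_weighted s (fun _ => w) _ hw
  calc _ ≤ P ^ (#s : ℝ)⁻¹ * ∑ i ∈ s, w * (f i / (f i + g i))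
        + P ^ (#s : ℝ)⁻¹ * ∑ i ∈ s, w * (g i / (f i + g i)) := add_le_add (amgm f) (amgm g)
    _ = P ^ (#s : ℝ)⁻¹ * ∑ _i ∈ s, w := by
        rw [← mul_add, ← sum_add_distrib]
        congr 1
        refine sum_congr rfl fun i hi => ?_
        rw [← mul_add, ← add_div, div_self (hzero i hi), mul_one]
    _ = P ^ (#s : ℝ)⁻¹ := by rw [hw, mul_one]

theorem add_pow_card_le_prod [Fintype ι] [DecidableEq ι] (I : Finset ι) (hI : I.Nonempty)
    {a b c : ι → ℝ≥0} (habc : ∀ i ∈ I, a i + b i ≤ c i) (hac : ∀ i ∉ I, a i ≤ c i)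
    (hbc : ∀ i ∉ I, b i ≤ c i) {x y : ℝ≥0} (hx : x ^ #I ≤ ∏ i, a i) (hy : y ^ #I ≤ ∏ i, b i) :
    (x + y) ^ #I ≤ ∏ i, c i := by
  have hn : (0 : ℝ) < #I := by exact_mod_cast hI.card_pos
  have root {z : ℝ≥0} {p : ℝ≥0} : z ^ #I ≤ p → z ≤ p ^ (#I : ℝ)⁻¹ := fun h =>
    (le_rpow_inv_iff hn).mpr (by rwa [rpow_natCast])
  rw [← rpow_natCast, ← le_rpow_inv_iff hn]
  set r := (#I : ℝ)⁻¹
  set Q := (∏ i ∈ Iᶜ, c i) ^ r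
  have hcompl {d : ι → ℝ≥0} (hd : ∀ i ∉ I, d i ≤ c i) :
      (∏ i, d i) ^ r ≤ (∏ i ∈ I, d i) ^ r * Q := by
    rw [← prod_mul_prod_compl I, mul_rpow]
    gcongr
    exact rpow_le_rpow (prod_le_prod' fun i hi => hd i (mem_compl.mp hi)) (inv_nonneg.mpr hn.le)
  calc x + y ≤ (∏ i, a i) ^ r + (∏ i, b i) ^ r := add_le_add (root hx) (root hy)
    _ ≤ ((∏ i ∈ I, a i) ^ r + (∏ i ∈ I, b i) ^ r) * Q := by
        rw [add_mul]; exact add_le_add (hcompl hac) (hcompl hbc)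
    _ ≤ (∏ i ∈ I, (a i + b i)) ^ r * Q := by gcongr; exact geom_mean_add_geom_mean_le I hI a b
    _ ≤ (∏ i ∈ I, c i) ^ r * Q := by gcongr with i hi; exact habc i hi
    _ = (∏ i, c i) ^ r := by rw [← mul_rpow, prod_mul_prod_compl]

end NNReal

theorem IsLowerSet.image_inter_eq_filter_subset {α : Type*} [DecidableEq α]
    {𝒜 : Finset (Finset α)} (h𝒜 : IsLowerSet (𝒜 : Set (Finset α))) (W : Finset α) :
    𝒜.image (· ∩ W) = {S ∈ 𝒜 | S ⊆ W} := by
  ext T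
  simp only [mem_image, mem_filter]
  constructor
  · rintro ⟨S, hS, rfl⟩
    exact ⟨h𝒜 inter_subset_left hS, inter_subset_right⟩
  · rintro ⟨hT, hTW⟩
    exact ⟨T, hT, inter_eq_left.mpr hTW⟩

namespace Finset

variable {α ι : Type*} [DecidableEq α]

theorem card_image_inter_nonMemberSubfamily_le (a : α) (𝒜 : Finset (Finset α)) (A : Finset α) :
    #((𝒜.nonMemberSubfamily a).image (· ∩ A)) ≤ #(𝒜.image (· ∩ A)) :=
  card_le_card (image_subset_image (filter_subset _ _))

theorem card_image_inter_memberSubfamily_le (a : α) (𝒜 : Finset (Finset α)) (A : Finset α) :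
    #((𝒜.memberSubfamily a).image (· ∩ A)) ≤ #(𝒜.image (· ∩ A)) := by
  refine (card_le_card fun T hT => ?_).trans (card_image_le (f := (erase · a)))
  simp only [memberSubfamily, mem_image, mem_filter] at hT ⊢
  obtain ⟨_, ⟨R, ⟨hR, -⟩, rfl⟩, rfl⟩ := hT
  exact ⟨R ∩ A, ⟨R, hR, rfl⟩, (erase_inter a R A).symm⟩

theorem card_image_inter_nonMemberSubfamily_add_le {a : α} {A : Finset α} (ha : a ∈ A)
    (𝒜 : Finset (Finset α)) :
    #((𝒜.nonMemberSubfamily a).image (· ∩ A)) + #((𝒜.memberSubfamily a).image (· ∩ A)) ≤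
      #(𝒜.image (· ∩ A)) := by
  refine (add_le_add (card_le_card ?_) (card_le_card ?_)).trans_eq
    ((add_comm _ _).trans (card_memberSubfamily_add_card_nonMemberSubfamily a _))
  · intro T hT
    simp only [mem_image, mem_nonMemberSubfamily] at hT ⊢
    obtain ⟨S, ⟨hS, haS⟩, rfl⟩ := hT
    exact ⟨⟨S, hS, rfl⟩, fun h => haS (mem_inter.mp h).1⟩
  · intro T hT
    simp only [memberSubfamily, mem_image, mem_filter] at hT ⊢
    obtain ⟨_, ⟨R, ⟨hR, haR⟩, rfl⟩, rfl⟩ := hT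
    exact ⟨R ∩ A, ⟨⟨R, hR, rfl⟩, mem_inter.mpr ⟨haR, ha⟩⟩, (erase_inter a R A).symm⟩

/-- Shearer's lemma. -/
theorem card_pow_le_prod_card_image_inter [Fintype ι] (𝒜 : Finset (Finset α)) (A : ι → Finset α)
    {t : ℕ} (ht : 0 < t) (hA : ∀ x, t ≤ #{i | x ∈ A i}) :
    #𝒜 ^ t ≤ ∏ i, #(𝒜.image (· ∩ A i)) := by
  classical
  induction 𝒜 using memberFamily_induction_on with
  | empty => simp [ht.ne']
  | singleton_empty => simp
  | @subfamily a 𝒜 h₀ h₁ =>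
    obtain ⟨J, hJ, rfl⟩ := exists_subset_card_eq (hA a)
    rw [← card_memberSubfamily_add_card_nonMemberSubfamily, add_comm]
    have hJA {i} (hi : i ∈ J) : a ∈ A i := (mem_filter.mp (hJ hi)).2
    exact_mod_cast NNReal.add_pow_card_le_prod J (card_pos.mp ht)
      (a := fun i => #((𝒜.nonMemberSubfamily a).image (· ∩ A i)))
      (b := fun i => #((𝒜.memberSubfamily a).image (· ∩ A i)))
      (c := fun i => #(𝒜.image (· ∩ A i)))
      (x := #(𝒜.nonMemberSubfamily a)) (y := #(𝒜.memberSubfamily a))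
      (fun i hi => by exact_mod_cast card_image_inter_nonMemberSubfamily_add_le (hJA hi) 𝒜)
      (fun i _ => by exact_mod_cast card_image_inter_nonMemberSubfamily_le a 𝒜 (A i))
      (fun i _ => by exact_mod_cast card_image_inter_memberSubfamily_le a 𝒜 (A i))
      (by exact_mod_cast h₀) (by exact_mod_cast h₁)

section Action

open Pointwise MulAction

variable {Γ : Type*} [Group Γ] [MulAction Γ α]

theorem card_filter_mem_smul_finset_eq [Fintype Γ] [IsPretransitive Γ α] (U : Finset α)
    (a b : α) : #{g : Γ | a ∈ g • U} = #{g : Γ | b ∈ g • U} := by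
  obtain ⟨h, rfl⟩ := exists_smul_eq Γ a b
  refine card_nbij' (h * ·) (h⁻¹ * ·) ?_ ?_ (fun g _ => inv_mul_cancel_left h g)
    (fun g _ => mul_inv_cancel_left h g) <;> intro g <;> simp [mul_smul, mem_inv_smul_finset_iff]

theorem card_filter_mem_smul_finset_mul_card [Fintype Γ] [Fintype α] [IsPretransitive Γ α]
    (U : Finset α) (a : α) :
    #{g : Γ | a ∈ g • U} * Fintype.card α = Fintype.card Γ * #U := by
  calc #{g : Γ | a ∈ g • U} * Fintype.card α = ∑ b : α, #{g : Γ | b ∈ g • U} := by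
        simp [card_filter_mem_smul_finset_eq U _ a, mul_comm]
    _ = ∑ g : Γ, #{b | b ∈ g • U} :=
        sum_card_bipartiteAbove_eq_sum_card_bipartiteBelow fun b (g : Γ) => b ∈ g • U
    _ = Fintype.card Γ * #U := by simp [card_smul_finset]

theorem card_filter_subset_smul_finset {𝒜 : Finset (Finset α)}
    (h𝒜 : ∀ g : Γ, ∀ S ∈ 𝒜, g • S ∈ 𝒜) (g : Γ) (W : Finset α) :
    #{S ∈ 𝒜 | S ⊆ g • W} = #{S ∈ 𝒜 | S ⊆ W} := by
  refine card_nbij' (g⁻¹ • ·) (g • ·) ?_ ?_ (fun S _ => smul_inv_smul g S)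
    (fun S _ => inv_smul_smul g S)
  · intro S hS
    simp only [coe_filter, Set.mem_ofPred_eq, subset_smul_finset_iff] at hS ⊢
    exact ⟨h𝒜 _ S hS.1, hS.2⟩
  · intro S hS
    simp only [coe_filter, Set.mem_ofPred_eq] at hS ⊢
    exact ⟨h𝒜 _ S hS.1, smul_finset_subset_smul_finset hS.2⟩

theorem card_pow_card_le_card_filter_subset_pow [Fintype Γ] [Fintype α] [IsPretransitive Γ α]
    {𝒜 : Finset (Finset α)} (h𝒜 : IsLowerSet (𝒜 : Set (Finset α)))
    (hinv : ∀ g : Γ, ∀ S ∈ 𝒜, g • S ∈ 𝒜) {W : Finset α} (hW : W.Nonempty) :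
    #𝒜 ^ #W ≤ #{S ∈ 𝒜 | S ⊆ W} ^ Fintype.card α := by
  obtain ⟨a, ha⟩ := hW
  have hcover : 0 < #{g : Γ | a ∈ g • W} := card_pos.mpr ⟨1, by simpa using ha⟩
  have hshearer := card_pow_le_prod_card_image_inter 𝒜 (fun g : Γ => g • W) hcover
    fun x => (card_filter_mem_smul_finset_eq W x a).ge
  simp only [h𝒜.image_inter_eq_filter_subset, card_filter_subset_smul_finset hinv, prod_const,
    card_univ] at hshearer
  exact Nat.pow_le_pow_of_pow_le_pow_of_mul_eq hshearer Fintype.card_ne_zero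
    (card_filter_mem_smul_finset_mul_card W a)

end Action

end Finset

theorem Set.ncard_setOf_eq_card_filter {α : Type*} [Fintype α] (P : Set α → Prop)
    [DecidablePred fun s : Finset α => P ↑s] :
    {s : Set α | P s}.ncard = #{s : Finset α | P ↑s} := by
  classical
  have himage : {s : Set α | P s} = (↑) '' {s : Finset α | P ↑s} := by
    ext s
    exact ⟨fun hs => ⟨s.toFinset, by simpa using hs, by simp⟩, by rintro ⟨s, hs, rfl⟩; exact hs⟩
  rw [himage, ncard_image_of_injective _ Finset.coe_injective, ncard_eq_toFinset_card']
  simp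

namespace SimpleGraph

variable {V W : Type*}

theorem isLowerSet_isIndepSet (G : SimpleGraph V) :
    IsLowerSet {s : Finset V | G.IsIndepSet ↑s} :=
  fun _ _ hts hs => hs.mono (Finset.coe_subset.mpr hts)

theorem Iso.isIndepSet_image_iff {G : SimpleGraph V} {G' : SimpleGraph W} (φ : G ≃g G')
    {s : Set V} : G'.IsIndepSet (φ '' s) ↔ G.IsIndepSet s := by
  rw [IsIndepSet, φ.injective.injOn.pairwise_image]
  simp [Set.Pairwise, Function.onFun, φ.map_adj_iff]

end SimpleGraph

/-- For a finite vertex-transitive graph `G = (V,E)` and a nonempty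
`U ⊆ V`, we have `log₂ i(G)/|V| ≤ log₂ i(G[U])/|U|`; equivalently,
`i(G)^{|U|} ≤ i(G[U])^{|V|}`. Here stable sets of the induced subgraph `G[U]` are
identified with the stable sets of `G` contained in `U`. -/
theorem stable_set_count_vertex_transitive {V : Type*} [Fintype V] (G : SimpleGraph V)
    (htrans : ∀ u v : V, ∃ φ : G ≃g G, φ u = v) (U : Set V) (hU : U.Nonempty) :
    ({S : Set V | S.Pairwise (fun x y => ¬ G.Adj x y)}).ncard ^ U.ncard ≤
      ({S : Set V | S ⊆ U ∧ S.Pairwise (fun x y => ¬ G.Adj x y)}).ncard ^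
        Fintype.card V := by
  classical
  have : Finite (G ≃g G) := Finite.of_injective _ RelIso.toEquiv_injective
  have := Fintype.ofFinite (G ≃g G)
  have : MulAction.IsPretransitive (G ≃g G) V := ⟨htrans⟩
  have key := card_pow_card_le_card_filter_subset_pow (Γ := G ≃g G)
    (𝒜 := {S : Finset V | G.IsIndepSet ↑S}) (by simpa using G.isLowerSet_isIndepSet)
    (fun φ S hS => by simpa [coe_smul_finset, ← Set.image_smul, φ.isIndepSet_image_iff] using hS)
    (W := U.toFinset) (by simpa using hU)
  rw [Set.ncard_setOf_eq_card_filter, Set.ncard_setOf_eq_card_filter,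
    Set.ncard_eq_toFinset_card']
  convert key using 3
  ext S
  simp [and_comm]
end

section
/- Let M be a matroid of rank r on an n-element ground set, and suppose M has a circuit of cardinality k with k < r. Then u(M) ≥ ((r−k)/n)^k, where u(M) = |U(M)|/C(n,r). -/
/-! Adding elements to a circuit `C` keeps the set dependent, and the result is never a circuit
again, let alone a circuit-hyperplane. So every `r`-set containing `C` lies in `U(M)`; there are
`C(n - k, r - k)` of them, and `C(n - k, r - k) / C(n, r) = C(r, k) / C(n, k)
= ∏_{i < k} (r - i) / (n - i) ≥ ((r - k) / n)^k`. -/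

open Filter Set

theorem Nat.sub_pow_mul_choose_le_pow_mul_choose {n r k : ℕ} (hkr : k ≤ r) :
    (r - k) ^ k * n.choose k ≤ n ^ k * r.choose k := by
  have hr : (r - k) ^ k ≤ r.descFactorial k :=
    (Nat.pow_le_pow_left (by omega) k).trans (Nat.pow_sub_le_descFactorial r k)
  have hprod := Nat.mul_le_mul hr (Nat.descFactorial_le_pow n k)
  rw [Nat.descFactorial_eq_factorial_mul_choose, Nat.descFactorial_eq_factorial_mul_choose]
    at hprod
  refine Nat.le_of_mul_le_mul_left ?_ k.factorial_pos
  calc k.factorial * ((r - k) ^ k * n.choose k)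
      = (r - k) ^ k * (k.factorial * n.choose k) := by ring
    _ ≤ k.factorial * r.choose k * n ^ k := hprod
    _ = k.factorial * (n ^ k * r.choose k) := by ring

theorem Nat.sub_pow_mul_choose_le_pow_mul_choose_sub {n r k : ℕ} (hkr : k ≤ r) (hrn : r ≤ n) :
    (r - k) ^ k * n.choose r ≤ n ^ k * (n - k).choose (r - k) := by
  refine Nat.le_of_mul_le_mul_left ?_ (Nat.choose_pos (hkr.trans hrn))
  calc n.choose k * ((r - k) ^ k * n.choose r)
      = ((r - k) ^ k * n.choose k) * n.choose r := by ring
    _ ≤ (n ^ k * r.choose k) * n.choose r :=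
        Nat.mul_le_mul_right _ (Nat.sub_pow_mul_choose_le_pow_mul_choose hkr)
    _ = n ^ k * (n.choose r * r.choose k) := by ring
    _ = n.choose k * (n ^ k * (n - k).choose (r - k)) := by rw [Nat.choose_mul hkr]; ring

theorem sub_div_pow_le_choose_div_choose {n r k : ℕ} (hkr : k ≤ r) (hrn : r ≤ n) :
    (((r : ℝ) - k) / n) ^ k ≤ ((n - k).choose (r - k) : ℝ) / n.choose r := by
  have hchoose : (0 : ℝ) < n.choose r := by exact_mod_cast Nat.choose_pos hrn
  have hpow : (0 : ℝ) < (n : ℝ) ^ k := by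
    rcases Nat.eq_zero_or_pos n with rfl | hn
    · simp [show k = 0 by omega]
    · positivity
  rw [← Nat.cast_sub hkr, div_pow, div_le_div_iff₀ hpow hchoose, mul_comm _ ((n : ℝ) ^ k)]
  exact_mod_cast Nat.sub_pow_mul_choose_le_pow_mul_choose_sub hkr hrn

theorem Set.choose_le_ncard_supersets {α : Type*} [Fintype α] (C : Set α) {r : ℕ}
    (hCr : C.ncard ≤ r) :
    (Fintype.card α - C.ncard).choose (r - C.ncard) ≤ {X : Set α | C ⊆ X ∧ X.ncard = r}.ncard := by
  classical
  let S := (C.toFinset)ᶜ.powersetCard (r - C.ncard)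
  have hdisj : ∀ D ∈ S, Disjoint C.toFinset D := fun D hD =>
    Finset.disjoint_left.mpr fun _ ha haD =>
      Finset.mem_compl.mp ((Finset.mem_powersetCard.mp hD).1 haD) ha
  have hS : S.card = (Fintype.card α - C.ncard).choose (r - C.ncard) := by
    rw [Finset.card_powersetCard, Finset.card_compl, Set.ncard_eq_toFinset_card']
  rw [← hS, ← Set.ncard_coe_finset]
  refine Set.ncard_le_ncard_of_injOn (fun D => C ∪ ↑D) ?_ ?_ (Set.toFinite _)
  · intro D hD
    refine ⟨subset_union_left, ?_⟩
    have hD' := Finset.mem_powersetCard.mp hD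
    rw [← Set.coe_toFinset C, ← Finset.coe_union, Set.ncard_coe_finset,
      Finset.card_union_of_disjoint (hdisj D hD), hD'.2, ← Set.ncard_eq_toFinset_card']
    omega
  · intro D₁ hD₁ D₂ hD₂ heq
    have heq' : C.toFinset ∪ D₁ = C.toFinset ∪ D₂ := by
      rw [← Finset.coe_inj, Finset.coe_union, Finset.coe_union, Set.coe_toFinset]
      exact heq
    rw [← Finset.union_sdiff_cancel_left (hdisj D₁ hD₁),
      ← Finset.union_sdiff_cancel_left (hdisj D₂ hD₂), heq']

theorem Matroid.IsBase.ncard_eq_rkt {α : Type*} {M : Matroid α} {B : Set α} (hB : M.IsBase B) :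
    B.ncard = M.rkt := by
  have hranks : {k | ∃ B', M.IsBase B' ∧ B'.ncard = k} = {B.ncard} := by
    ext k
    constructor
    · rintro ⟨B', hB', rfl⟩
      exact hB'.ncard_eq_ncard_of_isBase hB
    · rintro rfl
      exact ⟨B, hB, rfl⟩
  rw [Matroid.rkt, hranks, csSup_singleton]

theorem Matroid.rkt_le_card {α : Type*} [Fintype α] (M : Matroid α) :
    M.rkt ≤ Fintype.card α := by
  obtain ⟨B, hB⟩ := M.exists_isBase
  rw [← hB.ncard_eq_rkt, ← Nat.card_eq_fintype_card, ← Set.ncard_univ]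
  exact Set.ncard_le_ncard (subset_univ B)

theorem Matroid.IsCircuit'.mem_matroidU_of_ssubset {α : Type*} {M : Matroid α} {C X : Set α}
    (hC : M.IsCircuit' C) (hCX : C ⊂ X) (hXE : X ⊆ M.E) (hX : X.ncard = M.rkt) :
    X ∈ matroidU M :=
  ⟨hX, hC.1.superset hCX.subset hXE, fun hXch => hXch.1.2 C hCX hC.1⟩

/-- Let `M` be a matroid of rank `r` on an `n`-element ground set with a
circuit of cardinality `k < r`. Then `u(M) ≥ ((r−k)/n)^k`, where `u(M) = |U(M)|/C(n,r)`. -/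
theorem u_fraction_of_small_circuit {α : Type*} [Fintype α] (M : Matroid α)
    {n r k : ℕ} (hn : Fintype.card α = n) (hE : M.E = Set.univ) (hr : M.rkt = r)
    (C : Set α) (hC : M.IsCircuit' C) (hk : C.ncard = k) (hkr : k < r) :
    (((r : ℝ) - (k : ℝ)) / (n : ℝ)) ^ k ≤
      (((matroidU M).ncard : ℝ)) / ((n.choose r : ℝ)) := by
  have hrn : r ≤ n := hn ▸ hr ▸ M.rkt_le_card
  have hsupersets : {X : Set α | C ⊆ X ∧ X.ncard = r} ⊆ matroidU M := by
    rintro X ⟨hCX, hX⟩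
    refine hC.mem_matroidU_of_ssubset (hCX.ssubset_of_ne ?_) (hE ▸ subset_univ X) (hr ▸ hX)
    rintro rfl
    omega
  have hcount : (n - k).choose (r - k) ≤ (matroidU M).ncard :=
    hn ▸ hk ▸ (C.choose_le_ncard_supersets (hk ▸ hkr.le)).trans
      (Set.ncard_le_ncard hsupersets (Set.toFinite _))
  calc (((r : ℝ) - k) / n) ^ k
      ≤ ((n - k).choose (r - k) : ℝ) / n.choose r := sub_div_pow_le_choose_div_choose hkr.le hrn
    _ ≤ (matroidU M).ncard / n.choose r := by gcongr
end
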